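/- arXiv:2311.04214 — 2 statements merged into one kernel-verified Lean document; each statement's English description precedes it below -/
import Mathlib

section
/- Over a triangulated closed orientable surface, the ℤ/2 incidence map M: ℤ₂^{edges} → ℤ₂^{faces}, (Mx)_σ = sum of x over the three edges of σ, has image equal to the kernel of the map ℤ₂^{faces} → ℤ₂ summing all coordinates; in particular (1,1,...,1) composed with M is zero since each edge lies in exactly two faces. -/
/-- For the ℤ/2 edge–face incidence map `M` of a triangulated closed (connected)
surface: the image of `M` equals the kernel of the coordinate-sum map
`ℤ₂^{faces} → ℤ₂`; i.e. `Σ_σ (Mx)_σ = 0` for all `x`, and every `y` with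
`Σ_σ y_σ = 0` is of the form `Mx`. -/
theorem stmt14 {E F : Type*} [Fintype E] [Fintype F] (incid : E → F → Bool)
    (hedge : ∀ e : E, (Finset.univ.filter fun σ : F => incid e σ = true).card = 2)
    (hface : ∀ σ : F, (Finset.univ.filter fun e : E => incid e σ = true).card = 3)
    (hconn : ∀ S : Finset F, S.Nonempty → S ≠ Finset.univ →
      ∃ (e : E) (σ τ : F), incid e σ = true ∧ incid e τ = true ∧ σ ∈ S ∧ τ ∉ S) :
    (∀ x : E → ZMod 2,
        (∑ σ : F, ∑ e ∈ Finset.univ.filter (fun e : E => incid e σ = true), x e) = 0) ∧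
      (∀ y : F → ZMod 2, (∑ σ : F, y σ) = 0 →
        ∃ x : E → ZMod 2, ∀ σ : F,
          (∑ e ∈ Finset.univ.filter (fun e : E => incid e σ = true), x e) = y σ) := by
  classical
  constructor
  · intro x
    have hswap : (∑ σ : F, ∑ e ∈ Finset.univ.filter (fun e : E => incid e σ = true), x e)
        = ∑ e : E, ∑ σ ∈ Finset.univ.filter (fun σ : F => incid e σ = true), x e := by
      simp only [Finset.sum_filter]
      exact Finset.sum_comm
    rw [hswap]
    apply Finset.sum_eq_zero
    intro e _
    rw [Finset.sum_const, hedge e, two_nsmul, CharTwo.add_self_eq_zero]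
  · set M : (E → ZMod 2) →ₗ[ZMod 2] (F → ZMod 2) :=
      { toFun := fun x σ => ∑ e ∈ Finset.univ.filter (fun e : E => incid e σ = true), x e
        map_add' := by intro x y; funext σ; simp [Finset.sum_add_distrib]
        map_smul' := by intro c x; funext σ; simp [Finset.mul_sum] } with hM
    have hpair : ∀ (e : E) (σ τ : F), incid e σ = true → incid e τ = true → σ ≠ τ →
        (Pi.single σ 1 : F → ZMod 2) + Pi.single τ 1 ∈ LinearMap.range M := by
      intro e σ τ hσ hτ hne
      refine ⟨Pi.single e 1, ?_⟩
      have hset : (Finset.univ.filter fun ρ : F => incid e ρ = true) = {σ, τ} := by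
        refine (Finset.eq_of_subset_of_card_le ?_ ?_).symm
        · intro ρ hρ
          simp only [Finset.mem_insert, Finset.mem_singleton] at hρ
          rcases hρ with rfl | rfl <;> simp [hσ, hτ]
        · rw [hedge e, Finset.card_insert_of_notMem (by simpa using hne),
            Finset.card_singleton]
      funext ρ
      have hmem : incid e ρ = true ↔ (ρ = σ ∨ ρ = τ) := by
        constructor
        · intro h
          have : ρ ∈ ({σ, τ} : Finset F) := hset ▸ (by simp [h])
          simpa using this
        · rintro (rfl | rfl) <;> assumption
      show (∑ e' ∈ Finset.univ.filter (fun e' : E => incid e' ρ = true),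
          Pi.single e (1:ZMod 2) e') = _
      rw [Finset.sum_pi_single']
      by_cases h1 : ρ = σ
      · subst h1
        simp [hσ, Pi.single_apply, hne]
      · by_cases h2 : ρ = τ
        · subst h2
          simp [hτ, Pi.single_apply, (Ne.symm hne)]
        · simp [hmem, h1, h2, Pi.single_apply]
    have hmain : ∀ σ τ : F, (Pi.single σ 1 : F → ZMod 2) + Pi.single τ 1
        ∈ LinearMap.range M := by
      intro σ τ
      set S : Finset F := Finset.univ.filter
        (fun τ' => (Pi.single σ 1 : F → ZMod 2) + Pi.single τ' 1 ∈ LinearMap.range M) with hS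
      have hσS : σ ∈ S := by
        refine Finset.mem_filter.2 ⟨Finset.mem_univ _, ?_⟩
        have h0 : (Pi.single σ 1 : F → ZMod 2) + Pi.single σ 1 = 0 := by
          funext ρ; exact CharTwo.add_self_eq_zero _
        rw [h0]; exact Submodule.zero_mem _
      have hSuniv : S = Finset.univ := by
        by_contra hne
        obtain ⟨e, α, β, hα, hβ, hαS, hβS⟩ := hconn S ⟨σ, hσS⟩ hne
        have hαβ : α ≠ β := by rintro rfl; exact hβS hαS
        have h1 : (Pi.single σ 1 : F → ZMod 2) + Pi.single α 1 ∈ LinearMap.range M :=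
          (Finset.mem_filter.1 hαS).2
        have h2 := hpair e α β hα hβ hαβ
        have h3 : (Pi.single σ 1 : F → ZMod 2) + Pi.single β 1 ∈ LinearMap.range M := by
          have hsum := Submodule.add_mem _ h1 h2
          have heq : ((Pi.single σ 1 : F → ZMod 2) + Pi.single α 1)
              + ((Pi.single α 1 : F → ZMod 2) + Pi.single β 1)
              = (Pi.single σ 1 : F → ZMod 2) + Pi.single β 1 := by
            funext ρ
            simp only [Pi.add_apply]
            have h := CharTwo.add_self_eq_zero ((Pi.single α 1 : F → ZMod 2) ρ)
            linear_combination h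
          rwa [heq] at hsum
        exact hβS (Finset.mem_filter.2 ⟨Finset.mem_univ _, h3⟩)
      have hτS : τ ∈ S := hSuniv ▸ Finset.mem_univ τ
      exact (Finset.mem_filter.1 hτS).2
    intro y hy
    by_cases hF : IsEmpty F
    · exact ⟨0, fun σ => (hF.false σ).elim⟩
    rw [not_isEmpty_iff] at hF
    obtain ⟨σ₀⟩ := hF
    have hyW : y ∈ LinearMap.range M := by
      have hrepr : y = ∑ τ : F, y τ • ((Pi.single σ₀ 1 : F → ZMod 2) + Pi.single τ 1) := by
        have hsum : ∑ τ : F, y τ • ((Pi.single σ₀ 1 : F → ZMod 2) + Pi.single τ 1)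
            = (∑ τ : F, y τ) • (Pi.single σ₀ 1 : F → ZMod 2) + ∑ τ : F, Pi.single τ (y τ) := by
          rw [Finset.sum_smul]
          rw [← Finset.sum_add_distrib]
          congr 1
          funext τ
          rw [smul_add]
          congr 1
          funext ρ
          simp [Pi.single_apply, mul_comm]
        rw [hsum, hy, zero_smul, zero_add, Finset.univ_sum_single]
      rw [hrepr]
      exact Submodule.sum_mem _ fun τ _ => Submodule.smul_mem _ _ (hmain σ₀ τ)
    obtain ⟨x, hx⟩ := hyW
    exact ⟨x, fun σ => congrFun hx σ⟩
end

section
/- In the complex obtained from the bipyramid over a triangle (5 vertices, 6 faces) by stellar subdivision of all 6 faces (adding 6 new vertices, giving 18 faces), every edge contains at least one of the 5 old vertices; consequently, in the coloring game at most 4 green faces can be produced, which is less than 18/4, so this sphere has no winning strategy. -/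
/-- Vertices of the stellar subdivision of the bipyramid over a triangle:
5 old vertices and 6 new ones (one per face of the bipyramid). -/
abbrev SubdivV := Fin 5 ⊕ Fin 6

/-- Old vertices: 0,1,2 form the base triangle, 3 and 4 are the apexes. -/
def oldV (i : Fin 5) : SubdivV := Sum.inl i
/-- New vertices: the face centers. -/
def newV (j : Fin 6) : SubdivV := Sum.inr j

/-- The three vertices of the `j`-th face of the bipyramid. -/
def bipyrFace (j : Fin 6) : SubdivV × SubdivV × SubdivV :=
  match j with
  | 0 => (oldV 3, oldV 0, oldV 1)
  | 1 => (oldV 3, oldV 1, oldV 2)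
  | 2 => (oldV 3, oldV 2, oldV 0)
  | 3 => (oldV 4, oldV 0, oldV 1)
  | 4 => (oldV 4, oldV 1, oldV 2)
  | 5 => (oldV 4, oldV 2, oldV 0)

/-- The 18 faces of the stellar subdivision: each face of the bipyramid is split
into three triangles through its new center vertex. -/
def subdivFaces : Finset (Finset SubdivV) :=
  Finset.univ.image (fun p : Fin 6 × Fin 3 =>
    match p.2 with
    | 0 => ({newV p.1, (bipyrFace p.1).1, (bipyrFace p.1).2.1} : Finset SubdivV)
    | 1 => ({newV p.1, (bipyrFace p.1).2.1, (bipyrFace p.1).2.2} : Finset SubdivV)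
    | 2 => ({newV p.1, (bipyrFace p.1).1, (bipyrFace p.1).2.2} : Finset SubdivV))

/-- Positions of the coloring game: `Reach R g` means that starting from at most
two initially red vertices, after some moves the set of red vertices is `R` and
`g` faces are green. A move picks an edge `{x, y}` with both endpoints uncolored
forming a face with an already colored vertex `w`, colors `x, y` red and the face
green. -/
inductive Reach : Finset SubdivV → ℕ → Prop
  | init (r : Finset SubdivV) (h1 : 1 ≤ r.card) (h2 : r.card ≤ 2) : Reach r 0
  | move (R : Finset SubdivV) (g : ℕ) (x y w : SubdivV) :
      Reach R g → x ∉ R → y ∉ R → x ≠ y → w ∈ R →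
      ({x, y, w} : Finset SubdivV) ∈ subdivFaces →
      Reach (insert x (insert y R)) (g + 1)

set_option maxRecDepth 40000 in
lemma card18 : subdivFaces.card = 18 := by rfl

lemma face_shape : ∀ s ∈ subdivFaces, ∃ j a b, s = ({newV j, oldV a, oldV b} : Finset SubdivV) := by
  intro s hs
  rw [subdivFaces, Finset.mem_image] at hs
  obtain ⟨⟨j, k⟩, -, rfl⟩ := hs
  fin_cases k <;> fin_cases j <;> exact ⟨_, _, _, rfl⟩

lemma face_left : ∀ s ∈ subdivFaces, ∀ x ∈ s, ∀ y ∈ s, x ≠ y →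
    x.isLeft = true ∨ y.isLeft = true := by
  intro s hs x hx y hy hxy
  obtain ⟨j, a, b, rfl⟩ := face_shape s hs
  simp only [Finset.mem_insert, Finset.mem_singleton] at hx hy
  rcases hx with rfl | rfl | rfl <;> rcases hy with rfl | rfl | rfl <;>
    simp_all [oldV, newV]

lemma univ_left : (Finset.univ.filter (fun v : SubdivV => v.isLeft = true)).card = 5 := by rfl

lemma key : ∀ R g, Reach R g →
    g ≤ 4 ∧ (1 ≤ g → g + 1 ≤ (R.filter (fun v => Sum.isLeft v = true)).card) := by
  intro R g h
  induction h with
  | init r h1 h2 => exact ⟨by omega, fun h => by omega⟩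
  | move R g x y w hR hx hy hxy hw hface ih =>
    have hxmem : x ∈ ({x, y, w} : Finset SubdivV) := by simp
    have hymem : y ∈ ({x, y, w} : Finset SubdivV) := by simp
    have hwmem : w ∈ ({x, y, w} : Finset SubdivV) := by simp
    have hxw : x ≠ w := fun e => hx (e ▸ hw)
    have hyw : y ≠ w := fun e => hy (e ▸ hw)
    have hub : ((insert x (insert y R)).filter (fun v => Sum.isLeft v = true)).card ≤ 5 := by
      calc ((insert x (insert y R)).filter (fun v => Sum.isLeft v = true)).card
          ≤ (Finset.univ.filter (fun v : SubdivV => Sum.isLeft v = true)).card :=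
            Finset.card_le_card (Finset.filter_subset_filter _ (Finset.subset_univ _))
        _ = 5 := univ_left
    have key2 : g + 2 ≤ ((insert x (insert y R)).filter (fun v => Sum.isLeft v = true)).card := by
      obtain ⟨z, hzxy, hzL⟩ : ∃ z, (z = x ∨ z = y) ∧ Sum.isLeft z = true := by
        rcases face_left _ hface x hxmem y hymem hxy with h | h
        · exact ⟨x, Or.inl rfl, h⟩
        · exact ⟨y, Or.inr rfl, h⟩
      have hznotR : z ∉ R := by rcases hzxy with rfl | rfl <;> assumption
      have hzS : z ∈ insert x (insert y R) := by rcases hzxy with rfl | rfl <;> simp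
      have hsub : insert z (R.filter (fun v => Sum.isLeft v = true)) ⊆
          (insert x (insert y R)).filter (fun v => Sum.isLeft v = true) := by
        intro v hv
        rcases Finset.mem_insert.mp hv with rfl | hv
        · exact Finset.mem_filter.mpr ⟨hzS, hzL⟩
        · obtain ⟨hvR, hvF⟩ := Finset.mem_filter.mp hv
          exact Finset.mem_filter.mpr ⟨by simp [Finset.mem_insert, hvR], hvF⟩
      have hcard : (R.filter (fun v => Sum.isLeft v = true)).card + 1 ≤
          ((insert x (insert y R)).filter (fun v => Sum.isLeft v = true)).card := by
        have h2 := Finset.card_le_card hsub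
        rwa [Finset.card_insert_of_notMem
          (fun hc => hznotR (Finset.mem_filter.mp hc).1)] at h2
      by_cases hg : 1 ≤ g
      · have := ih.2 hg; omega
      · have hg0 : g = 0 := by omega
        by_cases hwL : Sum.isLeft w = true
        · have hwf : w ∈ R.filter (fun v => Sum.isLeft v = true) :=
            Finset.mem_filter.mpr ⟨hw, hwL⟩
          have h1 : 1 ≤ (R.filter (fun v => Sum.isLeft v = true)).card :=
            Finset.card_pos.mpr ⟨w, hwf⟩
          omega
        · have hxL : Sum.isLeft x = true := by
            rcases face_left _ hface x hxmem w hwmem hxw with h | h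
            · exact h
            · exact absurd h hwL
          have hyL : Sum.isLeft y = true := by
            rcases face_left _ hface y hymem w hwmem hyw with h | h
            · exact h
            · exact absurd h hwL
          have hsub2 : ({x, y} : Finset SubdivV) ⊆
              (insert x (insert y R)).filter (fun v => Sum.isLeft v = true) := by
            intro v hv
            rcases Finset.mem_insert.mp hv with rfl | hv
            · exact Finset.mem_filter.mpr ⟨by simp, hxL⟩
            · rw [Finset.mem_singleton] at hv
              subst hv
              exact Finset.mem_filter.mpr ⟨by simp, hyL⟩
          have hc2 : ({x, y} : Finset SubdivV).card = 2 := Finset.card_pair hxy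
          have h2' : 2 ≤ ((insert x (insert y R)).filter
              (fun v => Sum.isLeft v = true)).card := by
            rw [← hc2]; exact Finset.card_le_card hsub2
          omega
    exact ⟨by omega, fun _ => by omega⟩

/-- There are 18 faces; every edge of the subdivided bipyramid (pair of distinct
vertices in a common face) contains an old vertex; consequently every run of the
coloring game produces at most 4 green faces, fewer than 18/4, so this
triangulated sphere has no winning strategy. -/
theorem stmt18 :
    subdivFaces.card = 18 ∧
      (∀ s ∈ subdivFaces, ∀ x ∈ s, ∀ y ∈ s, x ≠ y →
        (∃ i, x = oldV i) ∨ (∃ i, y = oldV i)) ∧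
      (∀ (R : Finset SubdivV) (g : ℕ), Reach R g →
        g ≤ 4 ∧ (g : ℚ) < (subdivFaces.card : ℚ) / 4) := by
  refine ⟨card18, ?_, ?_⟩
  · intro s hs x hx y hy hxy
    rcases face_left s hs x hx y hy hxy with h | h
    · obtain ⟨i, hi⟩ := Sum.isLeft_iff.mp h
      exact Or.inl ⟨i, hi⟩
    · obtain ⟨i, hi⟩ := Sum.isLeft_iff.mp h
      exact Or.inr ⟨i, hi⟩
  · intro R g h
    have hk := (key R g h).1
    refine ⟨hk, ?_⟩
    rw [card18]
    have : (g : ℚ) ≤ 4 := by exact_mod_cast hk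
    linarith
end
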